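/- arXiv:1802.01289 — 3 statements merged into one kernel-verified Lean document; each statement's English description precedes it below -/
import Mathlib

section
/- Let V be a finite nonempty set of nodes with a demand function w : V → ℝ≥0 and a distance function d : V × V → ℝ≥0. For a nonempty subset S ⊆ V, define cost(S) = ∑_{v ∈ V} w(v) · (min_{s ∈ S} d(s,v)). If Ŝ ⊆ V with |Ŝ| = k minimizes cost over all k-element subsets of V, then for every partition of V into the (Voronoi) regions {V_i} where V_i consists of nodes whose nearest element of Ŝ is ŝ_i, each ŝ_i minimizes the regional cost s ↦ ∑_{v ∈ V_i} w(v) d(s,v) over all s ∈ V_i. -/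
/-- Total weighted cost of serving all nodes of `V` by the facility set `S`:
each node is served by its nearest facility. -/
noncomputable def kMedianCost {V : Type*} [Fintype V] (w : V → ℝ) (d : V → V → ℝ)
    (S : Finset V) : ℝ :=
  ∑ v, w v * sInf ((fun s => d s v) '' (S : Set V))

private lemma sInf_le_of_mem' {V : Type*} (d : V → V → ℝ) (S : Finset V) {t : V} (ht : t ∈ S)
    (v : V) : sInf ((fun s => d s v) '' (S : Set V)) ≤ d t v :=
  csInf_le (((S : Set V).toFinite.image _).bddBelow) ⟨t, ht, rfl⟩

/-- **Lemma 1.** If `Ŝ` (of cardinality `k`) minimizes the cost over all `k`-element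
subsets, then in the Voronoi partition generated by `Ŝ` (given by the assignment `a`
sending each node to a nearest generator), each generator is a cost center of its region. -/
theorem optimal_placement_is_centroidal_voronoi
    {V : Type*} [Fintype V] [DecidableEq V]
    (w : V → ℝ) (d : V → V → ℝ)
    (hw : ∀ v, 0 ≤ w v) (hd : ∀ u v, 0 ≤ d u v)
    (k : ℕ) (Shat : Finset V) (hcard : Shat.card = k) (hne : Shat.Nonempty)
    (hopt : ∀ S : Finset V, S.card = k → kMedianCost w d Shat ≤ kMedianCost w d S)
    (a : V → V) (ha : ∀ v, a v ∈ Shat)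
    (hnear : ∀ v, d (a v) v = sInf ((fun s => d s v) '' (Shat : Set V))) :
    ∀ s ∈ Shat, ∀ s' ∈ Finset.univ.filter (fun v => a v = s),
      ∑ v ∈ Finset.univ.filter (fun v => a v = s), w v * d s v ≤
      ∑ v ∈ Finset.univ.filter (fun v => a v = s), w v * d s' v := by
  intro s hs s' hs'
  simp only [Finset.mem_filter] at hs'
  by_cases hmem : s' ∈ Shat
  · -- s' is itself a generator: pointwise comparison with the nearest-facility distance
    apply Finset.sum_le_sum
    intro v hv
    simp only [Finset.mem_filter] at hv
    have h1 : d s v = sInf ((fun s => d s v) '' (Shat : Set V)) := by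
      rw [← hv.2]; exact hnear v
    have h2 := sInf_le_of_mem' d Shat hmem v
    exact mul_le_mul_of_nonneg_left (h1 ▸ h2) (hw v)
  · -- swap argument
    set S : Finset V := insert s' (Shat.erase s) with hS
    have hs'S : s' ∈ S := Finset.mem_insert_self _ _
    have hk1 : 1 ≤ k := hcard ▸ Finset.card_pos.mpr ⟨s, hs⟩
    have hcardS : S.card = k := by
      rw [hS, Finset.card_insert_of_notMem (fun h => hmem (Finset.mem_of_mem_erase h)),
        Finset.card_erase_of_mem hs, hcard]
      omega
    have hle := hopt S hcardS
    unfold kMedianCost at hle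
    set R : Finset V := Finset.univ.filter (fun v => a v = s) with hR
    have hsplit : ∀ (f : V → ℝ), ∑ v, f v = ∑ v ∈ R, f v + ∑ v ∈ Rᶜ, f v := by
      intro f
      rw [← Finset.sum_add_sum_compl R f]
    rw [hsplit, hsplit] at hle
    have hA : ∀ v ∈ R, w v * sInf ((fun s => d s v) '' (Shat : Set V)) = w v * d s v := by
      intro v hv
      simp only [hR, Finset.mem_filter] at hv
      rw [← hnear v, hv.2]
    have hB : ∀ v ∈ R, w v * sInf ((fun s => d s v) '' (S : Set V)) ≤ w v * d s' v := by
      intro v _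
      exact mul_le_mul_of_nonneg_left (sInf_le_of_mem' d S hs'S v) (hw v)
    have hC : ∀ v ∈ Rᶜ, w v * sInf ((fun s => d s v) '' (S : Set V)) ≤
        w v * sInf ((fun s => d s v) '' (Shat : Set V)) := by
      intro v hv
      simp only [hR, Finset.mem_compl, Finset.mem_filter, Finset.mem_univ, true_and] at hv
      have hav : a v ∈ S := by
        rw [hS]
        exact Finset.mem_insert_of_mem (Finset.mem_erase.mpr ⟨hv, ha v⟩)
      have := sInf_le_of_mem' d S hav v
      rw [hnear v] at this
      exact mul_le_mul_of_nonneg_left this (hw v)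
    have h1 : ∑ v ∈ R, w v * sInf ((fun s => d s v) '' (Shat : Set V)) = ∑ v ∈ R, w v * d s v :=
      Finset.sum_congr rfl hA
    have h2 : ∑ v ∈ R, w v * sInf ((fun s => d s v) '' (S : Set V)) ≤ ∑ v ∈ R, w v * d s' v :=
      Finset.sum_le_sum hB
    have h3 : ∑ v ∈ Rᶜ, w v * sInf ((fun s => d s v) '' (S : Set V)) ≤
        ∑ v ∈ Rᶜ, w v * sInf ((fun s => d s v) '' (Shat : Set V)) :=
      Finset.sum_le_sum hC
    rw [h1] at hle
    linarith
end

section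
/- Let T = (V, E) be a finite tree with additive path distances, nonnegative edge distances, self-costs d(v,v), and demands w : V → ℝ≥0. For adjacent nodes u and v in T, let T_v(u) denote the component of T containing v when edge (u,v) is removed, and similarly T_u(v). Then cost(u,T) = cost(v,T) + w(T_v(u))·d(u,v) − w(v)·d(v,v) − w(T_u(v))·d(v,u) + w(u)·d(u,u), where cost(s,T) = w(s)d(s,s) + ∑_{x ≠ s} w(x)·dist_T(s,x) and w(A) = ∑_{x∈A} w(x). -/
open Classical in
/-- **Equation (10) (neighboring-cost relation).** Let `u` and `v` be adjacent nodes
of a finite tree; removing the edge `(u,v)` splits the node set into the component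
`A = T_u(v)` containing `u` and the component `B = T_v(u)` containing `v`, and the
additive path distances satisfy `dist v x = d v u + dist u x` on `A` and
`dist u x = d u v + dist v x` on `B`. Then
`cost(u,T) = cost(v,T) + w(T_v(u))·d(u,v) − w(v)·d(v,v) − w(T_u(v))·d(v,u) + w(u)·d(u,u)`,
where `cost(s,T) = w(s)·d(s,s) + ∑_{x ≠ s} w(x)·dist(s,x)`. -/
theorem neighboring_cost_relation
    {V : Type*} [Fintype V]
    (w : V → ℝ) (d : V → V → ℝ) (dist : V → V → ℝ)
    (hw : ∀ v, 0 ≤ w v) (hd : ∀ x y, 0 ≤ d x y) (hdist : ∀ x y, 0 ≤ dist x y)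
    (A B : Finset V) (hdisj : Disjoint A B) (hcover : A ∪ B = Finset.univ)
    (u v : V) (hu : u ∈ A) (hv : v ∈ B)
    (huu : dist u u = 0) (hvv : dist v v = 0)
    (hA : ∀ x ∈ A, dist v x = d v u + dist u x)
    (hB : ∀ x ∈ B, dist u x = d u v + dist v x) :
    (w u * d u u + ∑ x ∈ Finset.univ.filter (fun x => x ≠ u), w x * dist u x) =
      (w v * d v v + ∑ x ∈ Finset.univ.filter (fun x => x ≠ v), w x * dist v x)
        + (∑ x ∈ B, w x) * d u v - w v * d v v
        - (∑ x ∈ A, w x) * d v u + w u * d u u := by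
  have hfull : ∀ (s : V), dist s s = 0 →
      ∑ x ∈ Finset.univ.filter (fun x => x ≠ s), w x * dist s x
        = ∑ x ∈ A, w x * dist s x + ∑ x ∈ B, w x * dist s x := by
    intro s hs
    rw [Finset.filter_ne', Finset.sum_erase _ (by simp [hs]),
      ← Finset.sum_union hdisj, hcover]
  rw [hfull u huu, hfull v hvv]
  have hBu : ∑ x ∈ B, w x * dist u x
      = (∑ x ∈ B, w x) * d u v + ∑ x ∈ B, w x * dist v x := by
    rw [Finset.sum_mul, ← Finset.sum_add_distrib]
    exact Finset.sum_congr rfl fun x hx => by rw [hB x hx]; ring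
  have hAv : ∑ x ∈ A, w x * dist v x
      = (∑ x ∈ A, w x) * d v u + ∑ x ∈ A, w x * dist u x := by
    rw [Finset.sum_mul, ← Finset.sum_add_distrib]
    exact Finset.sum_congr rfl fun x hx => by rw [hA x hx]; ring
  rw [hBu, hAv]; ring
end

section
/- Let T be a finite undirected tree with positive edge distances, zero self-costs, and demands w : V → ℝ≥0 with total weight W = ∑_v w(v) > 0. A node c minimizes cost(s,T) = ∑_{x} w(x) dist_T(s,x) over s ∈ V if and only if for every neighbor u of c, w(T_u(c)) ≤ W/2, i.e., every subtree hanging off c carries at most half the total demand. -/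
set_option linter.unusedSectionVars false
set_option linter.unusedVariables false

/-- Weighted path distance in a graph with edge lengths `len`: the infimum of the
total length over all walks from `u` to `v`. On a tree with nonnegative edge
lengths this is the additive length of the unique path. -/
noncomputable def wdist {V : Type*} (G : SimpleGraph V) (len : V → V → ℝ) (u v : V) : ℝ :=
  sInf {r : ℝ | ∃ p : G.Walk u v, r = (p.darts.map (fun e => len e.fst e.snd)).sum}

namespace TCAux

open SimpleGraph Walk Finset

variable {V : Type*} [DecidableEq V] (G : SimpleGraph V) (len : V → V → ℝ)

noncomputable def wl {u v : V} (p : G.Walk u v) : ℝ :=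
  (p.darts.map (fun e => len e.fst e.snd)).sum

@[simp] theorem wl_nil {u : V} : wl G len (Walk.nil : G.Walk u u) = 0 := by simp [wl]

@[simp] theorem wl_cons {u v x : V} (h : G.Adj u v) (p : G.Walk v x) :
    wl G len (Walk.cons h p) = len u v + wl G len p := by simp [wl]

theorem wl_append {u v x : V} (p : G.Walk u v) (q : G.Walk v x) :
    wl G len (p.append q) = wl G len p + wl G len q := by simp [wl, darts_append]

theorem wl_nonneg (hnn : ∀ u v, G.Adj u v → 0 ≤ len u v) {u v : V} (p : G.Walk u v) :
    0 ≤ wl G len p := by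
  induction p with
  | nil => simp
  | cons h p ih => rw [wl_cons]; exact add_nonneg (hnn _ _ h) ih

theorem wl_dropUntil_le (hnn : ∀ u v, G.Adj u v → 0 ≤ len u v) {u v x : V}
    (p : G.Walk v x) (h : u ∈ p.support) :
    wl G len (p.dropUntil u h) ≤ wl G len p := by
  have := congrArg (wl G len) (p.take_spec h)
  rw [wl_append] at this
  have := wl_nonneg G len hnn (p.takeUntil u h)
  linarith

theorem wl_bypass_le (hnn : ∀ u v, G.Adj u v → 0 ≤ len u v) {u v : V} (p : G.Walk u v) :
    wl G len p.bypass ≤ wl G len p := by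
  induction p with
  | nil => simp [Walk.bypass]
  | cons h p ih =>
    simp only [Walk.bypass]
    split_ifs with hb
    · calc wl G len (p.bypass.dropUntil _ hb) ≤ wl G len p.bypass :=
            wl_dropUntil_le G len hnn _ hb
        _ ≤ wl G len p := ih
        _ ≤ wl G len (Walk.cons h p) := by rw [wl_cons]; linarith [hnn _ _ h]
    · rw [wl_cons, wl_cons]; linarith

theorem path_unique (hT : G.IsTree) {u v : V} (p q : G.Walk u v)
    (hp : p.IsPath) (hq : q.IsPath) : p = q :=
  (hT.existsUnique_path u v).unique hp hq

theorem wdist_eq (hT : G.IsTree) (hnn : ∀ u v, G.Adj u v → 0 ≤ len u v)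
    {u v : V} (p : G.Walk u v) (hp : p.IsPath) :
    wdist G len u v = wl G len p := by
  apply le_antisymm
  · have hbdd : BddBelow {r : ℝ | ∃ q : G.Walk u v,
        r = (q.darts.map (fun e => len e.fst e.snd)).sum} :=
      ⟨0, by rintro r ⟨q, rfl⟩; exact wl_nonneg G len hnn q⟩
    have hmem : wl G len p ∈ {r : ℝ | ∃ q : G.Walk u v,
        r = (q.darts.map (fun e => len e.fst e.snd)).sum} := by exact ⟨p, rfl⟩
    exact csInf_le hbdd hmem
  · have hne : {r : ℝ | ∃ q : G.Walk u v,
        r = (q.darts.map (fun e => len e.fst e.snd)).sum}.Nonempty :=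
      ⟨wl G len p, by exact ⟨p, rfl⟩⟩
    apply le_csInf hne
    rintro r ⟨q, rfl⟩
    have h1 : wl G len q.bypass ≤ wl G len q := wl_bypass_le G len hnn q
    rwa [path_unique G hT q.bypass p q.bypass_isPath hp] at h1

theorem wdist_self (hT : G.IsTree) (hnn : ∀ u v, G.Adj u v → 0 ≤ len u v) (u : V) :
    wdist G len u u = 0 := by
  rw [wdist_eq G len hT hnn Walk.nil IsPath.nil, wl_nil]

theorem wdist_adj (hT : G.IsTree) (hnn : ∀ u v, G.Adj u v → 0 ≤ len u v)
    {u v : V} (h : G.Adj u v) : wdist G len u v = len u v := by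
  have hp : (Walk.cons h Walk.nil).IsPath := by
    apply IsPath.nil.cons; simp [h.ne]
  rw [wdist_eq G len hT hnn _ hp, wl_cons, wl_nil, add_zero]

theorem dichotomy (hT : G.IsTree) (hnn : ∀ u v, G.Adj u v → 0 ≤ len u v)
    {a b x : V} (hab : G.Adj a b) :
    wdist G len a x = len a b + wdist G len b x ∨
    wdist G len b x = len b a + wdist G len a x := by
  obtain ⟨p, hp, -⟩ := hT.existsUnique_path a x
  by_cases hb : b ∈ p.support
  · left
    have h1 := congrArg (wl G len) (p.take_spec hb)
    rw [wl_append] at h1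
    have ht : wdist G len a b = wl G len (p.takeUntil b hb) :=
      wdist_eq G len hT hnn _ (hp.takeUntil hb)
    have hd : wdist G len b x = wl G len (p.dropUntil b hb) :=
      wdist_eq G len hT hnn _ (hp.dropUntil hb)
    have hax : wdist G len a x = wl G len p := wdist_eq G len hT hnn p hp
    have hadj := wdist_adj G len hT hnn hab
    linarith
  · right
    have hq : (Walk.cons hab.symm p).IsPath := hp.cons hb
    have h2 := wdist_eq G len hT hnn _ hq
    rw [wl_cons] at h2
    rw [h2, wdist_eq G len hT hnn p hp]

theorem not_mem_of_side (hT : G.IsTree) (hpos : ∀ u v, G.Adj u v → 0 < len u v)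
    {b v x : V} (hbv : G.Adj b v)
    (hx : wdist G len b x = len b v + wdist G len v x)
    {q : G.Walk v x} (hq : q.IsPath) : b ∉ q.support := by
  have hnn : ∀ u v, G.Adj u v → 0 ≤ len u v := fun u v h => (hpos u v h).le
  intro hb
  have h1 := congrArg (wl G len) (q.take_spec hb)
  rw [wl_append] at h1
  have ht : wdist G len v b = wl G len (q.takeUntil b hb) :=
    wdist_eq G len hT hnn _ (hq.takeUntil hb)
  have hd : wdist G len b x = wl G len (q.dropUntil b hb) :=
    wdist_eq G len hT hnn _ (hq.dropUntil hb)
  have hvx : wdist G len v x = wl G len q := wdist_eq G len hT hnn q hq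
  have hadj := wdist_adj G len hT hnn hbv.symm
  have h2 := hpos b v hbv
  have h3 := hpos v b hbv.symm
  linarith

theorem subtree_mono (hT : G.IsTree) (hpos : ∀ u v, G.Adj u v → 0 < len u v)
    {a b v x : V} (hab : G.Adj a b) (hbv : G.Adj b v) (hva : v ≠ a)
    (hx : wdist G len b x = len b v + wdist G len v x) :
    wdist G len a x = len a b + wdist G len b x := by
  have hnn : ∀ u v, G.Adj u v → 0 ≤ len u v := fun u v h => (hpos u v h).le
  rcases dichotomy G len hT hnn hab (x := x) with h | h
  · exact h
  · exfalso
    obtain ⟨q, hq, -⟩ := hT.existsUnique_path v x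
    obtain ⟨r, hr, -⟩ := hT.existsUnique_path a x
    have hbq : b ∉ q.support := not_mem_of_side G len hT hpos hbv hx hq
    have hbr : b ∉ r.support := not_mem_of_side G len hT hpos hab.symm h hr
    have h1 : (Walk.cons hbv q).IsPath := hq.cons hbq
    have h2 : (Walk.cons hab.symm r).IsPath := hr.cons hbr
    have heq := path_unique G hT _ _ h1 h2
    have hda := congrArg Walk.darts heq
    rw [darts_cons, darts_cons] at hda
    have hdd := ((List.cons.injEq _ _ _ _).mp hda).1
    have : v = a := by
      have := congrArg (fun d : G.Dart => d.snd) hdd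
      simpa using this
    exact hva this

open Classical in
theorem cost_diff [Fintype V] (hT : G.IsTree) (hpos : ∀ u v, G.Adj u v → 0 < len u v)
    (hsym : ∀ u v, len u v = len v u) (w : V → ℝ) {c u : V} (hcu : G.Adj c u) :
    ∑ x, w x * wdist G len u x = (∑ x, w x * wdist G len c x) +
      len c u * ((∑ v, w v) - 2 * ∑ x ∈ Finset.univ.filter
        (fun x => wdist G len c x = len c u + wdist G len u x), w x) := by
  have hnn : ∀ u v, G.Adj u v → 0 ≤ len u v := fun u v h => (hpos u v h).le
  set pred := fun x => wdist G len c x = len c u + wdist G len u x with hpred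
  have hsplit := Finset.sum_filter_add_sum_filter_not Finset.univ pred
      (fun x => w x * wdist G len u x)
  have hsplitc := Finset.sum_filter_add_sum_filter_not Finset.univ pred
      (fun x => w x * wdist G len c x)
  have hsplitw := Finset.sum_filter_add_sum_filter_not Finset.univ pred w
  have hApart : ∑ x ∈ Finset.univ.filter pred, w x * wdist G len u x
      = (∑ x ∈ Finset.univ.filter pred, w x * wdist G len c x)
        - len c u * ∑ x ∈ Finset.univ.filter pred, w x := by
    rw [Finset.mul_sum, ← Finset.sum_sub_distrib]
    refine Finset.sum_congr rfl fun x hx => ?_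
    rw [Finset.mem_filter] at hx
    rw [hx.2]; ring
  have hBpart : ∑ x ∈ Finset.univ.filter (fun x => ¬ pred x), w x * wdist G len u x
      = (∑ x ∈ Finset.univ.filter (fun x => ¬ pred x), w x * wdist G len c x)
        + len c u * ∑ x ∈ Finset.univ.filter (fun x => ¬ pred x), w x := by
    rw [Finset.mul_sum, ← Finset.sum_add_distrib]
    refine Finset.sum_congr rfl fun x hx => ?_
    rw [Finset.mem_filter] at hx
    have h2 : wdist G len u x = len u c + wdist G len c x := by
      rcases dichotomy G len hT hnn hcu (x := x) with h | h
      · exact absurd h hx.2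
      · exact h
    rw [h2, hsym u c]; ring
  have hfin : len c u * ((∑ v, w v) - 2 * ∑ x ∈ Finset.univ.filter pred, w x)
      = len c u * (∑ x ∈ Finset.univ.filter (fun x => ¬ pred x), w x)
        - len c u * (∑ x ∈ Finset.univ.filter pred, w x) := by
    rw [← hsplitw]; ring
  linarith

open Classical in
theorem cost_mono [Fintype V] (hT : G.IsTree) (hpos : ∀ u v, G.Adj u v → 0 < len u v)
    (hsym : ∀ u v, len u v = len v u) (w : V → ℝ) (hw : ∀ v, 0 ≤ w v)
    {a s : V} (p : G.Walk a s) (hp : p.IsPath)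
    (hcond : ∀ b, G.Adj a b → b ∈ p.support →
      (∑ x ∈ Finset.univ.filter
          (fun x => wdist G len a x = len a b + wdist G len b x), w x)
        ≤ (∑ v, w v) / 2) :
    (∑ x, w x * wdist G len a x) ≤ ∑ x, w x * wdist G len s x := by
  induction p with
  | nil => exact le_refl _
  | @cons a b s hab q ih =>
    rw [Walk.cons_isPath_iff] at hp
    obtain ⟨hq, hanotin⟩ := hp
    have hbmem : b ∈ (Walk.cons hab q).support := by
      rw [Walk.support_cons]; exact List.mem_cons_of_mem _ q.start_mem_support
    have hbA := hcond b hab hbmem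
    have step1 : (∑ x, w x * wdist G len a x) ≤ ∑ x, w x * wdist G len b x := by
      have hd := cost_diff G len hT hpos hsym w hab
      have hl := hpos a b hab
      have : 0 ≤ len a b * ((∑ v, w v) - 2 * ∑ x ∈ Finset.univ.filter
          (fun x => wdist G len a x = len a b + wdist G len b x), w x) :=
        mul_nonneg hl.le (by linarith)
      linarith
    refine step1.trans (ih hq ?_)
    intro v hbv hvs
    have hva : v ≠ a := by rintro rfl; exact hanotin hvs
    have hsub : Finset.univ.filter
        (fun x => wdist G len b x = len b v + wdist G len v x) ⊆
        Finset.univ.filter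
        (fun x => wdist G len a x = len a b + wdist G len b x) := by
      intro x hx
      rw [Finset.mem_filter] at hx ⊢
      exact ⟨Finset.mem_univ x, subtree_mono G len hT hpos hab hbv hva hx.2⟩
    have hle := Finset.sum_le_sum_of_subset_of_nonneg hsub (fun x _ _ => hw x)
    linarith

end TCAux

open Classical in
/-- **Characterization of the cost center (1-median) of a tree.** In a finite tree
with positive symmetric edge lengths and total demand `W = ∑ v, w v > 0`, a node `c`
minimizes `cost(s,T) = ∑_x w(x)·dist_T(s,x)` if and only if for every neighbor `u`
of `c`, the weight of the subtree `T_u(c)` hanging off `c` through `u` (the nodes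
`x` whose path from `c` passes through `u`) is at most `W/2`. -/
theorem tree_cost_center_iff_weighted_centroid
    {V : Type*} [Fintype V]
    (G : SimpleGraph V) (hT : G.IsTree)
    (len : V → V → ℝ)
    (hpos : ∀ u v, G.Adj u v → 0 < len u v)
    (hsym : ∀ u v, len u v = len v u)
    (w : V → ℝ) (hw : ∀ v, 0 ≤ w v) (hW : 0 < ∑ v, w v)
    (c : V) :
    (∀ s : V, (∑ x, w x * wdist G len c x) ≤ ∑ x, w x * wdist G len s x) ↔
      (∀ u : V, G.Adj c u →
        (∑ x ∈ Finset.univ.filter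
            (fun x => wdist G len c x = len c u + wdist G len u x), w x)
          ≤ (∑ v, w v) / 2) := by
  constructor
  · intro hmin u hcu
    have hd := TCAux.cost_diff G len hT hpos hsym w hcu
    have h1 := hmin u
    have hl := hpos c u hcu
    by_contra hgt
    push_neg at hgt
    have : len c u * ((∑ v, w v) - 2 * ∑ x ∈ Finset.univ.filter
        (fun x => wdist G len c x = len c u + wdist G len u x), w x) < 0 :=
      mul_neg_of_pos_of_neg hl (by linarith)
    linarith
  · intro hc s
    obtain ⟨p, hp, -⟩ := hT.existsUnique_path c s
    exact TCAux.cost_mono G len hT hpos hsym w hw p hp (fun b hb _ => hc b hb)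
end
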